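/- arXiv:1609.07675 — 2 statements merged into one kernel-verified Lean document; each statement's English description precedes it below -/
import Mathlib

section
/- On the upper half-space model {(z,w) ∈ ℂ × ℍ} with w₂ = Im w, the 2-form Ω = −i( dw∧dw̄/w₂² + w₂ dz∧dz̄ ) satisfies dΩ = θ ∧ Ω with θ = dw₂/w₂; i.e., Ω is locally conformally symplectic (in fact locally conformally Kähler) with Lee form θ. -/
open Finset

/- Real coordinates on `ℂ × ℍ`: index `0 ↦ x`, `1 ↦ y` (`z = x + iy`),
`2 ↦ w₁`, `3 ↦ w₂` (`w = w₁ + i w₂`, with `w₂ > 0` on `ℍ`).  Forms are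
represented by their coefficient functions relative to the constant coframe
`dx i`, with values in the exterior algebra of `ℝ⁴`. -/

/-- The coordinate 1-forms `dx, dy, dw₁, dw₂` as exterior algebra elements. -/
noncomputable def dxE (i : Fin 4) : ExteriorAlgebra ℝ (Fin 4 → ℝ) :=
  ExteriorAlgebra.ι ℝ (Pi.single i 1)

/-- The 1-form `∑ aᵢ dxᵢ` evaluated at `p`. -/
noncomputable def oneForm (a : Fin 4 → (Fin 4 → ℝ) → ℝ) (p : Fin 4 → ℝ) :
    ExteriorAlgebra ℝ (Fin 4 → ℝ) := ∑ i, a i p • dxE i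

/-- The 2-form `∑ cᵢⱼ dxᵢ ∧ dxⱼ` evaluated at `p`. -/
noncomputable def twoForm (c : Fin 4 → Fin 4 → (Fin 4 → ℝ) → ℝ) (p : Fin 4 → ℝ) :
    ExteriorAlgebra ℝ (Fin 4 → ℝ) := ∑ i, ∑ j, c i j p • (dxE i * dxE j)

/-- Exterior derivative of the 2-form with coefficients `c`, at `p`. -/
noncomputable def extd2 (c : Fin 4 → Fin 4 → (Fin 4 → ℝ) → ℝ) (p : Fin 4 → ℝ) :
    ExteriorAlgebra ℝ (Fin 4 → ℝ) :=
  ∑ k, ∑ i, ∑ j, fderiv ℝ (c i j) p (Pi.single k 1) • (dxE k * (dxE i * dxE j))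

/-- The Lee form `θ = dw₂/w₂`. -/
noncomputable def leeCoef : Fin 4 → (Fin 4 → ℝ) → ℝ :=
  fun i p => if i = 3 then (p 3)⁻¹ else 0

/-- The coefficients of `Ω = -i(dw∧dw̄/w₂² + w₂ dz∧dz̄)
    = -(2/w₂²) dw₁∧dw₂ - 2w₂ dx∧dy`. -/
noncomputable def bigOmegaCoef : Fin 4 → Fin 4 → (Fin 4 → ℝ) → ℝ :=
  fun i j p =>
    if i = 2 ∧ j = 3 then -2 / (p 3) ^ 2
    else if i = 0 ∧ j = 1 then -2 * p 3 else 0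

/-! `Ω = a(w₂) dw₁∧dw₂ + b(w₂) dx∧dy` with `a = -2/w₂²`, `b = -2w₂`. Since the coefficients depend
on `w₂` alone, `dΩ = dw₂ ∧ ∂Ω/∂w₂ = b'(w₂) dw₂∧dx∧dy`, the `a`-term dying because
`dw₂∧dw₁∧dw₂ = 0`; likewise `θ ∧ Ω = (b(w₂)/w₂) dw₂∧dx∧dy`. As `b` is linear, `b' = b/w₂ = -2`. -/

lemma dxE_mul_self (i : Fin 4) : dxE i * dxE i = 0 := ExteriorAlgebra.ι_sq_zero _

lemma dxE_mul_anticomm (i j : Fin 4) : dxE i * dxE j = -(dxE j * dxE i) :=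
  eq_neg_of_add_eq_zero_left (ExteriorAlgebra.ι_add_mul_swap _ _)

lemma dxE_mul_dxE_mul_self (i j : Fin 4) : dxE i * (dxE j * dxE i) = 0 := by
  rw [← mul_assoc, dxE_mul_anticomm i j, neg_mul, mul_assoc, dxE_mul_self, mul_zero, neg_zero]

lemma fderiv_comp_apply_single {ι : Type*} [Fintype ι] [DecidableEq ι] {φ : ℝ → ℝ}
    {p : ι → ℝ} {l : ι} (h : DifferentiableAt ℝ φ (p l)) (k : ι) :
    fderiv ℝ (fun q : ι → ℝ => φ (q l)) p (Pi.single k 1)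
      = (Pi.single l (deriv φ (p l)) : ι → ℝ) k := by
  have hφ : HasFDerivAt (fun q : ι → ℝ => φ (q l))
      (deriv φ (p l) • ContinuousLinearMap.proj l) p :=
    h.hasDerivAt.comp_hasFDerivAt p (hasFDerivAt_apply (𝕜 := ℝ) (F' := fun _ => ℝ) l p)
  rw [hφ.fderiv]
  by_cases hk : k = l
  · subst hk; simp
  · simp [hk, Ne.symm hk]

lemma extd2_comp_apply (c : Fin 4 → Fin 4 → ℝ → ℝ) (l : Fin 4) (p : Fin 4 → ℝ)
    (hc : ∀ i j, DifferentiableAt ℝ (c i j) (p l)) :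
    extd2 (fun i j q => c i j (q l)) p = dxE l * twoForm (fun i j q => deriv (c i j) (q l)) p := by
  rw [extd2, Finset.sum_eq_single l]
  · simp [twoForm, fderiv_comp_apply_single (hc _ _), Finset.mul_sum]
  · intro k _ hk
    simp [fderiv_comp_apply_single (hc _ _), hk]
  · simp

/-- `a(w₂) dw₁∧dw₂ + b(w₂) dx∧dy`: a combination of the area forms of the factors `ℍ` and `ℂ`. -/
def productCoef (a b : ℝ → ℝ) : Fin 4 → Fin 4 → ℝ → ℝ :=
  fun i j t => if i = 2 ∧ j = 3 then a t else if i = 0 ∧ j = 1 then b t else 0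

lemma bigOmegaCoef_eq_productCoef :
    bigOmegaCoef = fun i j q => productCoef (fun t => -2 / t ^ 2) (fun t => -2 * t) i j (q 3) :=
  rfl

lemma differentiableAt_productCoef {a b : ℝ → ℝ} {t : ℝ} (ha : DifferentiableAt ℝ a t)
    (hb : DifferentiableAt ℝ b t) (i j : Fin 4) : DifferentiableAt ℝ (productCoef a b i j) t := by
  unfold productCoef
  split_ifs
  exacts [ha, hb, differentiableAt_const 0]

lemma deriv_productCoef (a b : ℝ → ℝ) (i j : Fin 4) :
    deriv (productCoef a b i j) = productCoef (deriv a) (deriv b) i j := by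
  unfold productCoef
  split_ifs <;> simp

lemma dxE_three_mul_twoForm_productCoef (a b : ℝ → ℝ) (p : Fin 4 → ℝ) :
    dxE 3 * twoForm (fun i j q => productCoef a b i j (q 3)) p
      = b (p 3) • (dxE 3 * (dxE 0 * dxE 1)) := by
  simp [twoForm, productCoef, Fin.sum_univ_four, mul_add, dxE_mul_dxE_mul_self]

lemma oneForm_leeCoef (p : Fin 4 → ℝ) : oneForm leeCoef p = (p 3)⁻¹ • dxE 3 := by
  simp [oneForm, leeCoef]

/-- On `ℂ × ℍ` (the region `w₂ > 0`), the 2-form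
`Ω = -i(dw∧dw̄/w₂² + w₂ dz∧dz̄)` satisfies `dΩ = θ ∧ Ω` with Lee form
`θ = dw₂/w₂`: it is locally conformally symplectic (indeed LCK). -/
theorem tricerri_form_is_lcs :
    ∀ p : Fin 4 → ℝ, 0 < p 3 →
      extd2 bigOmegaCoef p = oneForm leeCoef p * twoForm bigOmegaCoef p := by
  intro p hp
  have ha : DifferentiableAt ℝ (fun t : ℝ => -2 / t ^ 2) (p 3) := by
    fun_prop (disch := positivity)
  have hb : DifferentiableAt ℝ (fun t : ℝ => -2 * t) (p 3) := by fun_prop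
  have hlee : deriv (fun t : ℝ => -2 * t) (p 3) = (p 3)⁻¹ * (-2 * p 3) := by
    field_simp
    simp
  rw [bigOmegaCoef_eq_productCoef, extd2_comp_apply _ 3 p (differentiableAt_productCoef ha hb),
    oneForm_leeCoef, smul_mul_assoc]
  simp only [deriv_productCoef, dxE_three_mul_twoForm_productCoef, smul_smul, hlee]
end

section
/- Let α > 1 be real and t ∈ ℝ with t ∉ {ln α, −ln α}. Let A be a 3×3 real matrix with eigenvalues α, β, β̄ where β ∉ ℝ and |β|² = 1/α. Then both block matrices [[I₃, −I₃],[I₃, −e^t·A]] and [[I₃, −I₃],[I₃, −e^t·(A^{-1})^T]] are invertible. -/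
open Polynomial Matrix

/-! By the Schur complement, `[[1, -1], [1, -M]]` is invertible iff `1 - M` is. For `M = e^t A`
this means that `e^{-t}` is not an eigenvalue of `A`; for `M = e^t (A⁻¹)ᵀ`, after transposing
and multiplying by `A`, that `e^t` is not. The characteristic polynomial shows that `α` is the
only real eigenvalue of `A`, and `e^{∓t} = α` is excluded by `t ≠ ±log α`. -/

namespace Matrix

variable {n R K : Type*} [Fintype n] [DecidableEq n]

theorem isUnit_fromBlocks_one_neg_one_one_neg_iff [CommRing R] (M : Matrix n n R) :
    IsUnit (fromBlocks (1 : Matrix n n R) (-1) 1 (-M)) ↔ IsUnit (1 - M) := by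
  rw [isUnit_iff_isUnit_det, isUnit_iff_isUnit_det (1 - M), det_fromBlocks_one₁₁, Matrix.mul_neg,
    Matrix.mul_one, sub_neg_eq_add, neg_add_eq_sub]

theorem isUnit_one_sub_smul_iff_inv_notMem_spectrum [Field K] (A : Matrix n n K) {c : K}
    (hc : c ≠ 0) : IsUnit (1 - c • A) ↔ c⁻¹ ∉ spectrum K A := by
  have h : algebraMap K (Matrix n n K) c⁻¹ - A = c⁻¹ • (1 - c • A) := by
    rw [Algebra.algebraMap_eq_smul_one, smul_sub, smul_smul, inv_mul_cancel₀ hc, one_smul]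
  rw [spectrum.notMem_iff, h]
  exact (isUnit_smul_iff (Units.mk0 c⁻¹ (inv_ne_zero hc)) _).symm

theorem isUnit_one_sub_smul_nonsing_inv_iff_notMem_spectrum [CommRing R] (A : Matrix n n R)
    (hA : IsUnit A.det) (c : R) : IsUnit (1 - c • A⁻¹) ↔ c ∉ spectrum R A := by
  have h : A * (1 - c • A⁻¹) = -(algebraMap R (Matrix n n R) c - A) := by
    rw [Matrix.mul_sub, Matrix.mul_one, Matrix.mul_smul, mul_nonsing_inv A hA,
      Algebra.algebraMap_eq_smul_one, neg_sub]
  rw [spectrum.notMem_iff, ← IsUnit.neg_iff (algebraMap R (Matrix n n R) c - A), ← h, (A.isUnit_iff_isUnit_det.mpr hA).mul_left_iff]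

theorem eq_of_mem_spectrum_of_charpoly_map_eq (A : Matrix n n ℝ) {α : ℝ} {β : ℂ}
    (hβ : β.im ≠ 0) (hchar : (A.map (fun x => (x : ℂ))).charpoly =
        (X - C (α : ℂ)) * (X - C β) * (X - C (starRingEnd ℂ β)))
    {s : ℝ} (hs : s ∈ spectrum ℝ A) : s = α := by
  rw [mem_spectrum_iff_not_isUnit_eval_charpoly, isUnit_iff_ne_zero, not_not] at hs
  have hroot : ((X - C (α : ℂ)) * (X - C β) * (X - C (starRingEnd ℂ β))).eval (s : ℂ) = 0 := by
    rw [← hchar, show (A.map fun x => (x : ℂ)) = A.map (algebraMap ℝ ℂ) from rfl, charpoly_map,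
      eval_map_algebraMap, ← Complex.coe_algebraMap, aeval_algebraMap_apply_eq_algebraMap_eval, hs,
      map_zero]
  simp only [eval_mul, eval_sub, eval_X, eval_C, mul_eq_zero, sub_eq_zero] at hroot
  rcases hroot with (h | h) | h
  · exact_mod_cast h
  · exact absurd (by simpa using congrArg Complex.im h.symm) hβ
  · exact absurd (by simpa using congrArg Complex.im h.symm) hβ

end Matrix

theorem fromBlocks_isUnit_of_ne_log_general
    (A : Matrix (Fin 3) (Fin 3) ℝ) (hdet : A.det = 1)
    (α : ℝ) (β : ℂ) (hβ : β.im ≠ 0)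
    (hchar : (A.map (fun x => (x : ℂ))).charpoly =
        (X - C (α : ℂ)) * (X - C β) * (X - C (starRingEnd ℂ β)))
    (t : ℝ) (ht : t ≠ Real.log α) (ht' : t ≠ -Real.log α) :
    IsUnit (Matrix.fromBlocks (1 : Matrix (Fin 3) (Fin 3) ℝ) (-1) 1
        (-(Real.exp t • A))) ∧
    IsUnit (Matrix.fromBlocks (1 : Matrix (Fin 3) (Fin 3) ℝ) (-1) 1
        (-(Real.exp t • (A⁻¹)ᵀ))) := by
  have hspec {s : ℝ} (hs : s ∈ spectrum ℝ A) : s = α :=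
    eq_of_mem_spectrum_of_charpoly_map_eq A hβ hchar hs
  constructor
  · rw [isUnit_fromBlocks_one_neg_one_one_neg_iff,
      isUnit_one_sub_smul_iff_inv_notMem_spectrum A (Real.exp_ne_zero t), ← Real.exp_neg]
    intro hs
    exact ht' (by rw [← hspec hs, Real.log_exp, neg_neg])
  · rw [isUnit_fromBlocks_one_neg_one_one_neg_iff, ← transpose_smul, ← transpose_one,
      ← transpose_sub, isUnit_transpose,
      isUnit_one_sub_smul_nonsing_inv_iff_notMem_spectrum A (by simp [hdet])]
    intro hs
    exact ht (by rw [← hspec hs, Real.log_exp])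

/-- Let `α > 1` and `t ∈ ℝ` with `t ∉ {ln α, -ln α}`.  Let `A` be a `3×3` real
matrix with `det A = 1` and eigenvalues `α, β, β̄` where `β ∉ ℝ` and
`|β|² = 1/α`.  Then both block matrices `[[I₃, -I₃], [I₃, -e^t·A]]` and
`[[I₃, -I₃], [I₃, -e^t·(A⁻¹)ᵀ]]` are invertible. -/
theorem fromBlocks_isUnit_of_ne_log
    (A : Matrix (Fin 3) (Fin 3) ℝ) (hdet : A.det = 1)
    (α : ℝ) (hα : 1 < α) (β : ℂ) (hβ : β.im ≠ 0)
    (hβabs : ‖β‖ ^ 2 = α⁻¹)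
    (hchar : (A.map (fun x => (x : ℂ))).charpoly =
        (X - C (α : ℂ)) * (X - C β) * (X - C (starRingEnd ℂ β)))
    (t : ℝ) (ht : t ≠ Real.log α) (ht' : t ≠ -Real.log α) :
    IsUnit (Matrix.fromBlocks (1 : Matrix (Fin 3) (Fin 3) ℝ) (-1) 1
        (-(Real.exp t • A))) ∧
    IsUnit (Matrix.fromBlocks (1 : Matrix (Fin 3) (Fin 3) ℝ) (-1) 1
        (-(Real.exp t • (A⁻¹)ᵀ))) :=
  fromBlocks_isUnit_of_ne_log_general A hdet α β hβ hchar t ht ht'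
end
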